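/- (Bachmann property) Let α, β < ε₀ be limit ordinals with [α]_n < β < α, where [·]_n denotes the standard fundamental (canonical) sequence. Then [β]_1 ≥ [α]_n and [β]_2 > [α]_n + 1. -/
import Mathlib


/-- Terms denoting ordinals below `ε₀`: `zero` is `0`, and `cons a b` is `ω^a + b`. -/
inductive T where
  | zero : T
  | cons (a b : T) : T
deriving DecidableEq

/-- Comparison of terms (correct on terms in Cantor normal form). -/
def T.lt : T → T → Prop
  | _, .zero => False
  | .zero, .cons _ _ => True
  | .cons a b, .cons c d => T.lt a c ∨ (a = c ∧ T.lt b d)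

def T.le (x y : T) : Prop := T.lt x y ∨ x = y

/-- Cantor normal form: exponents are nonincreasing. -/
def T.NF : T → Prop
  | .zero => True
  | .cons a b => a.NF ∧ b.NF ∧ ∀ c d : T, b = .cons c d → ¬ T.lt a c

/-- A term denotes a limit ordinal iff it is nonzero and its last exponent is nonzero. -/
def T.isLimit : T → Bool
  | .zero => false
  | .cons a .zero => a ≠ .zero
  | .cons _ b => b.isLimit

/-- Predecessor of a successor-ordinal term (junk value otherwise). -/
def T.pred : T → T
  | .zero => .zero
  | .cons .zero .zero => .zero
  | .cons a .zero => .cons a .zero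
  | .cons a b => .cons a (T.pred b)

/-- The term `α + 1`. -/
def T.addOne : T → T
  | .zero => .cons .zero .zero
  | .cons a b => .cons a (T.addOne b)

/-- The term `ω^a * n`. -/
def T.omegaPowMul (a : T) : ℕ → T
  | 0 => .zero
  | n + 1 => .cons a (T.omegaPowMul a n)

/-- The canonical (fundamental) sequence: `[ω^α + β]_n = ω^α + [β]_n` for limit `β`;
`[ω^(α+1)]_n = ω^α · n`; `[ω^α]_n = ω^([α]_n)` for limit `α`.
(Junk value on non-limit terms.) -/
def T.fund : T → ℕ → T
  | .zero, _ => .zero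
  | .cons a (.cons c d), n => .cons a (T.fund (.cons c d) n)
  | .cons a .zero, n =>
    if a.isLimit then .cons (T.fund a n) .zero
    else match a with
      | .zero => .zero
      | .cons _ _ => T.omegaPowMul a.pred n

namespace T

theorem lt_cons_iff {a b c d : T} :
    lt (cons a b) (cons c d) ↔ lt a c ∨ (a = c ∧ lt b d) := Iff.rfl

theorem not_lt_zero (x : T) : ¬ lt x zero := by cases x <;> simp [lt]

theorem zero_lt {x : T} (h : x ≠ zero) : lt zero x := by
  cases x with
  | zero => exact absurd rfl h
  | cons a b => trivial

theorem lt_irrefl (x : T) : ¬ lt x x := by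
  induction x with
  | zero => simp [lt]
  | cons a b iha ihb =>
    rintro (h | ⟨-, h⟩)
    · exact iha h
    · exact ihb h

theorem lt_trans : ∀ (x y z : T), lt x y → lt y z → lt x z
  | _, _, .zero, _, h => absurd h (not_lt_zero _)
  | .zero, _, .cons _ _, _, _ => trivial
  | .cons _ _, .zero, .cons _ _, h, _ => absurd h (not_lt_zero _)
  | .cons a b, .cons c d, .cons e f, h1, h2 => by
    rcases h1 with h1 | ⟨rfl, h1⟩ <;> rcases h2 with h2 | ⟨rfl, h2⟩
    · exact Or.inl (lt_trans a c e h1 h2)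
    · exact Or.inl h1
    · exact Or.inl h2
    · exact Or.inr ⟨rfl, lt_trans b d f h1 h2⟩

theorem lt_trichotomy : ∀ (x y : T), lt x y ∨ x = y ∨ lt y x
  | .zero, .zero => Or.inr (Or.inl rfl)
  | .zero, .cons _ _ => Or.inl trivial
  | .cons _ _, .zero => Or.inr (Or.inr trivial)
  | .cons a b, .cons c d => by
    rcases lt_trichotomy a c with h | rfl | h
    · exact Or.inl (Or.inl h)
    · rcases lt_trichotomy b d with h | rfl | h
      · exact Or.inl (Or.inr ⟨rfl, h⟩)
      · exact Or.inr (Or.inl rfl)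
      · exact Or.inr (Or.inr (Or.inr ⟨rfl, h⟩))
    · exact Or.inr (Or.inr (Or.inl h))

theorem lt_addOne_iff : ∀ (x y : T), lt x (addOne y) ↔ (lt x y ∨ x = y)
  | .zero, .zero => by simp [addOne, lt]
  | .zero, .cons c d => by simp [addOne, lt]
  | .cons a b, .zero => by
    constructor
    · rintro (h | ⟨rfl, h⟩) <;> exact absurd h (not_lt_zero _)
    · rintro (h | h)
      · exact absurd h (not_lt_zero _)
      · exact absurd h (by simp)
  | .cons a b, .cons c d => by
    show lt a c ∨ (a = c ∧ lt b (addOne d)) ↔ _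
    rw [lt_addOne_iff b d]
    constructor
    · rintro (h | ⟨rfl, h | rfl⟩)
      · exact Or.inl (Or.inl h)
      · exact Or.inl (Or.inr ⟨rfl, h⟩)
      · exact Or.inr rfl
    · rintro ((h | ⟨rfl, h⟩) | h)
      · exact Or.inl h
      · exact Or.inr ⟨rfl, Or.inl h⟩
      · injection h with h1 h2; subst h1; subst h2; exact Or.inr ⟨rfl, Or.inr rfl⟩

theorem lt_addOne (x : T) : lt x (addOne x) := (lt_addOne_iff x x).mpr (Or.inr rfl)

theorem le_zero (x : T) : le zero x := by
  cases x with
  | zero => exact Or.inr rfl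
  | cons a b => exact Or.inl trivial

theorem addOne_pred : ∀ x : T, x ≠ zero → x.isLimit = false → addOne x.pred = x
  | .zero, h, _ => absurd rfl h
  | .cons .zero .zero, _, _ => rfl
  | .cons (.cons u v) .zero, _, hl => by simp [isLimit] at hl
  | .cons a (.cons c d), _, hl => by
    have hl' : isLimit (cons c d) = false := by simpa [isLimit] using hl
    have hp : (cons a (cons c d)).pred = cons a (pred (cons c d)) := by
      simp [pred]
    rw [hp]
    show cons a (addOne (pred (cons c d))) = _
    rw [addOne_pred (cons c d) (by simp) hl']

theorem fund_ne_zero : ∀ (x : T) (n : ℕ), x.isLimit = true → 1 ≤ n → fund x n ≠ zero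
  | .cons a .zero, n, hl, hn => by
    have ha : a ≠ zero := by simpa [isLimit] using hl
    show (if a.isLimit then _ else _) ≠ zero
    by_cases h : a.isLimit = true
    · simp [h]
    · rw [if_neg h]
      cases a with
      | zero => exact absurd rfl ha
      | cons u v =>
        cases n with
        | zero => omega
        | succ m => simp [omegaPowMul]
  | .cons a (.cons c d), n, _, _ => by simp [fund]

theorem one_lt_fund2 : ∀ x : T, x.isLimit = true → lt (cons zero zero) (fund x 2)
  | .cons a (.cons c d), hl => by
    have hl' : isLimit (cons c d) = true := by simpa [isLimit] using hl
    show lt (cons zero zero) (cons a (fund (cons c d) 2))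
    cases a with
    | zero => exact Or.inr ⟨rfl, zero_lt (fund_ne_zero _ 2 hl' (by norm_num))⟩
    | cons u v => exact Or.inl trivial
  | .cons a .zero, hl => by
    have ha : a ≠ zero := by simpa [isLimit] using hl
    show lt (cons zero zero) (if a.isLimit then _ else _)
    by_cases h : a.isLimit = true
    · rw [if_pos h]
      exact Or.inl (zero_lt (fund_ne_zero a 2 h (by norm_num)))
    · rw [if_neg h]
      cases a with
      | zero => exact absurd rfl ha
      | cons u v =>
        show lt (cons zero zero) (cons (pred (cons u v)) (cons (pred (cons u v)) zero))
        cases hp : pred (cons u v) with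
        | zero => exact Or.inr ⟨rfl, trivial⟩
        | cons p q => exact Or.inl trivial

theorem addOne_cons (a b : T) : addOne (cons a b) = cons a (addOne b) := rfl

theorem le_cons {a x y : T} (h : le x y) : le (cons a x) (cons a y) := by
  rcases h with h | rfl
  · exact Or.inl (Or.inr ⟨rfl, h⟩)
  · exact Or.inr rfl

theorem fund_cons_cons (a c d : T) (n : ℕ) :
    (cons a (cons c d)).fund n = cons a ((cons c d).fund n) := by simp [fund]

theorem fund_cons_zero_limit (a : T) (h : a.isLimit = true) (n : ℕ) :
    (cons a zero).fund n = cons (a.fund n) zero := by simp [fund, h]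

theorem fund_cons_zero_succ (u v : T) (h : (cons u v).isLimit = false) (n : ℕ) :
    (cons (cons u v) zero).fund n = omegaPowMul (cons u v).pred n := by simp [fund, h]

theorem bachmann_aux : ∀ (β α : T) (n : ℕ), 1 ≤ n →
    α.NF → β.NF → α.isLimit = true → β.isLimit = true →
    lt (α.fund n) β → lt β α →
    le (α.fund n) (β.fund 1) ∧ lt (addOne (α.fund n)) (β.fund 2) := by
  intro β
  induction β with
  | zero =>
    intro α n _ _ _ _ hβlim _ _
    simp [isLimit] at hβlim
  | cons b1 b2 ih1 ih2 =>
    intro α n hn hα hβ hαlim hβlim h1 h2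
    obtain ⟨hNb1, hNb2, hNbh⟩ := id hβ
    cases α with
    | zero => simp [isLimit] at hαlim
    | cons a t =>
      obtain ⟨hNa, hNt, hNth⟩ := id hα
      cases t with
      | cons c d =>
        have htlim : (cons c d).isLimit = true := by simpa [isLimit] using hαlim
        rw [fund_cons_cons] at h1 ⊢
        rw [lt_cons_iff] at h1 h2
        rcases h1 with hab | ⟨rfl, h1t⟩
        · rcases h2 with hba | ⟨rfl, -⟩
          · exact absurd (lt_trans _ _ _ hab hba) (lt_irrefl _)
          · exact absurd hab (lt_irrefl _)
        · rcases h2 with hba | ⟨-, h2t⟩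
          · exact absurd hba (lt_irrefl _)
          · cases b2 with
            | zero => exact absurd h1t (not_lt_zero _)
            | cons u v =>
              have hb2lim : (cons u v).isLimit = true := by simpa [isLimit] using hβlim
              obtain ⟨g1, g2⟩ := ih2 (cons c d) n hn hNt hNb2 htlim hb2lim h1t h2t
              rw [fund_cons_cons, fund_cons_cons, addOne_cons]
              exact ⟨le_cons g1, Or.inr ⟨rfl, g2⟩⟩
      | zero =>
        have hane : a ≠ zero := by simpa [isLimit] using hαlim
        by_cases hL : a.isLimit = true
        · -- a is a limit
          rw [fund_cons_zero_limit a hL] at h1 ⊢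
          rw [lt_cons_iff] at h1 h2
          rcases h2 with hba | ⟨rfl, h⟩
          · rcases h1 with hFb | ⟨rfl, hb2⟩
            · -- lt (fund a n) b1
              cases b2 with
              | cons u v =>
                rw [fund_cons_cons, fund_cons_cons, addOne_cons]
                exact ⟨Or.inl (Or.inl hFb), Or.inl hFb⟩
              | zero =>
                have hb1ne : b1 ≠ zero := by simpa [isLimit] using hβlim
                by_cases hL1 : b1.isLimit = true
                · rw [fund_cons_zero_limit b1 hL1, fund_cons_zero_limit b1 hL1, addOne_cons]
                  obtain ⟨g1, g2⟩ := ih1 a n hn hNa hNb1 hL hL1 hFb hba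
                  constructor
                  · rcases g1 with g | g
                    · exact Or.inl (Or.inl g)
                    · exact Or.inr (by rw [g])
                  · exact Or.inl (lt_trans _ _ _ (lt_addOne _) g2)
                · cases b1 with
                  | zero => exact absurd rfl hb1ne
                  | cons u v =>
                    have hLf : (cons u v).isLimit = false := by simpa using hL1
                    have hap : addOne ((cons u v).pred) = cons u v :=
                      addOne_pred _ (by simp) hLf
                    rw [fund_cons_zero_succ u v hLf, fund_cons_zero_succ u v hLf, addOne_cons]
                    generalize hgen : (cons u v).pred = q at hap ⊢
                    rw [show omegaPowMul q 1 = cons q zero from rfl,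
                      show omegaPowMul q 2 = cons q (cons q zero) from rfl]
                    have hle : le (a.fund n) q := (lt_addOne_iff _ _).mp (hap ▸ hFb)
                    constructor
                    · rcases hle with g | g
                      · exact Or.inl (Or.inl g)
                      · exact Or.inr (by rw [g])
                    · rcases hle with g | g
                      · exact Or.inl g
                      · refine Or.inr ⟨g, ?_⟩
                        have hq : q ≠ zero := g ▸ fund_ne_zero a n hL hn
                        exact Or.inl (zero_lt hq)
            · -- fund a n = b1
              cases b2 with
              | zero => exact absurd hb2 (lt_irrefl _)
              | cons u v =>
                have hb2lim : (cons u v).isLimit = true := by simpa [isLimit] using hβlim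
                rw [fund_cons_cons, fund_cons_cons, addOne_cons]
                exact ⟨le_cons (le_zero _), Or.inr ⟨rfl, one_lt_fund2 _ hb2lim⟩⟩
          · exact absurd h (not_lt_zero _)
        · -- a is a successor
          cases a with
          | zero => exact absurd rfl hane
          | cons u v =>
            have hLf : (cons u v).isLimit = false := by simpa using hL
            have hap : addOne ((cons u v).pred) = cons u v :=
              addOne_pred _ (by simp) hLf
            rw [fund_cons_zero_succ u v hLf] at h1 ⊢
            have hf' : ∀ k, (cons (cons u v) zero).fund k = omegaPowMul (cons u v).pred k :=
              fun k => fund_cons_zero_succ u v hLf k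
            generalize hgen : (cons u v).pred = p at hap h1 hf' ⊢
            obtain ⟨m, rfl⟩ : ∃ m, n = m + 1 := ⟨n - 1, by omega⟩
            rw [show omegaPowMul p (m+1) = cons p (omegaPowMul p m) from rfl] at h1 ⊢
            rw [lt_cons_iff] at h1 h2
            rcases h2 with hba | ⟨rfl, h⟩
            · have hble' := (lt_addOne_iff b1 p).mpr
              rcases h1 with hpb | ⟨hpb1, h1t⟩
              · rcases (lt_addOne_iff b1 p).mp (hap ▸ hba) with g | rfl
                · exact absurd (lt_trans _ _ _ hpb g) (lt_irrefl _)
                · exact absurd hpb (lt_irrefl _)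
              · cases b2 with
                | zero => exact absurd h1t (not_lt_zero _)
                | cons e f =>
                  have hb2lim : (cons e f).isLimit = true := by simpa [isLimit] using hβlim
                  have hne := hNbh e f rfl
                  rw [← hpb1] at hne ⊢
                  rw [fund_cons_cons, fund_cons_cons, addOne_cons]
                  cases m with
                  | zero =>
                    exact ⟨le_cons (le_zero _), Or.inr ⟨rfl, one_lt_fund2 _ hb2lim⟩⟩
                  | succ k =>
                    have hb2a : lt (cons e f) (cons (cons u v) zero) := by
                      refine Or.inl ?_
                      rcases lt_trichotomy e p with g | rfl | g
                      · exact lt_trans _ _ _ g (hap ▸ lt_addOne _)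
                      · exact hap ▸ lt_addOne _
                      · exact absurd g hne
                    obtain ⟨g1, g2⟩ := ih2 (cons (cons u v) zero) (k+1) (by omega)
                      hα hNb2 hαlim hb2lim (by rw [hf']; exact h1t) hb2a
                    rw [hf' (k+1)] at g1 g2
                    exact ⟨le_cons g1, Or.inr ⟨rfl, g2⟩⟩
            · exact absurd h (not_lt_zero _)

end T


/-- The Bachmann property of the canonical sequences below `ε₀`. -/
theorem bachmann_property (α β : T) (n : ℕ) (hn : 1 ≤ n)
    (hα : α.NF) (hβ : β.NF) (hαlim : α.isLimit) (hβlim : β.isLimit)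
    (h1 : T.lt (α.fund n) β) (h2 : T.lt β α) :
    T.le (α.fund n) (β.fund 1) ∧ T.lt (T.addOne (α.fund n)) (β.fund 2) :=
  T.bachmann_aux β α n hn hα hβ hαlim hβlim h1 h2
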